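/- arXiv:math/9309214 — 3 statements merged into one kernel-verified Lean document; each statement's English description precedes it below -/
import Mathlib

section
/- Let M be a 𝔤-manifold and let φ ∈ Ω^p_hor(M;𝔤)^𝔤 and ψ ∈ Ω^q_hor(M;𝔤)^𝔤 be horizontal 𝔤-equivariant forms. Then the Frölicher–Nijenhuis bracket of the associated tangent-bundle-valued forms satisfies [ζ_φ, ζ_ψ] = −ζ_{[φ,ψ]^∧}; that is, ζ restricted to basic 𝔤-valued forms is an anti-homomorphism of graded Lie algebras. -/
open Equiv Fin Function

section Zeta
variable {E 𝔤 : Type*} [NormedAddCommGroup E] [NormedSpace ℝ E]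
    [NormedAddCommGroup 𝔤] [NormedSpace ℝ 𝔤] [FiniteDimensional ℝ 𝔤]
    {ζ : 𝔤 → E → E}

/-- Expansion of `ζ X y` in a basis of `𝔤`. -/
lemma zeta_repr (hζlin : ∀ x : E, IsLinearMap ℝ fun X => ζ X x)
    {ι : Type*} [Fintype ι] (b : Module.Basis ι ℝ 𝔤) (X : 𝔤) (y : E) :
    ζ X y = ∑ i, b.repr X i • ζ (b i) y := by
  conv_lhs => rw [← b.sum_repr X]
  show IsLinearMap.mk' _ (hζlin y) (∑ i, b.repr X i • b i) = _
  rw [map_sum]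
  simp only [map_smul]
  rfl

lemma zeta_fderiv (hζlin : ∀ x : E, IsLinearMap ℝ fun X => ζ X x)
    (hζsmooth : ∀ X, ContDiff ℝ (⊤ : ℕ∞) (ζ X))
    {g : E → 𝔤} {x : E} (hg : DifferentiableAt ℝ g x) :
    DifferentiableAt ℝ (fun y => ζ (g y) y) x ∧
      ∀ u, fderiv ℝ (fun y => ζ (g y) y) x u =
        ζ (fderiv ℝ g x u) x + fderiv ℝ (ζ (g x)) x u := by
  classical
  set b := Module.finBasis ℝ 𝔤 with hb
  have hcd : ∀ i, DifferentiableAt ℝ (ζ (b i)) x :=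
    fun i => ((hζsmooth (b i)).differentiable (by simp)).differentiableAt
  set ci : ∀ _ : Fin (Module.finrank ℝ 𝔤), 𝔤 →L[ℝ] ℝ :=
    fun i => LinearMap.toContinuousLinearMap (b.coord i) with hci
  have hfun : (fun y => ζ (g y) y) = fun y => ∑ i, (ci i (g y)) • ζ (b i) y := by
    funext y; exact zeta_repr hζlin b (g y) y
  have hterm : ∀ i, HasFDerivAt (fun y => (ci i (g y)) • ζ (b i) y)
      ((ci i (g x)) • fderiv ℝ (ζ (b i)) x
        + (((ci i).comp (fderiv ℝ g x)).smulRight (ζ (b i) x))) x := by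
    intro i
    exact HasFDerivAt.smul (((ci i).hasFDerivAt).comp x hg.hasFDerivAt) (hcd i).hasFDerivAt
  have H : HasFDerivAt (fun y => ζ (g y) y)
      (∑ i, ((ci i (g x)) • fderiv ℝ (ζ (b i)) x
        + (((ci i).comp (fderiv ℝ g x)).smulRight (ζ (b i) x)))) x := by
    rw [hfun]
    exact HasFDerivAt.fun_sum (fun i _ => hterm i)
  refine ⟨H.differentiableAt, fun u => ?_⟩
  rw [H.fderiv]
  have h2 : HasFDerivAt (ζ (g x)) (∑ i, (ci i (g x)) • fderiv ℝ (ζ (b i)) x) x := by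
    have : (ζ (g x)) = fun y => ∑ i, (ci i (g x)) • ζ (b i) y := by
      funext y; exact zeta_repr hζlin b (g x) y
    rw [this]
    exact HasFDerivAt.fun_sum (fun i _ => ((hcd i).hasFDerivAt).const_smul _)
  rw [h2.fderiv]
  rw [zeta_repr hζlin b (fderiv ℝ g x u) x]
  simp only [ContinuousLinearMap.sum_apply, ContinuousLinearMap.add_apply,
    ContinuousLinearMap.smul_apply, ContinuousLinearMap.smulRight_apply,
    ContinuousLinearMap.comp_apply]
  rw [Finset.sum_add_distrib, add_comm]
  simp only [hci, LinearMap.coe_toContinuousLinearMap', Module.Basis.coord_apply]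

end Zeta


open Equiv Fin Function

/-- Generic slot-exchange lemma: in a signed sum over all permutations, the special slot of the
update can be moved from `j` to `j0`. -/
lemma key_swap {E W V : Type*} [AddCommGroup W] [Module ℝ W]
    [AddCommGroup V] [Module ℝ V] [NormedAddCommGroup E] [NormedSpace ℝ E]
    {n m m' : ℕ} (em : Fin m → Fin n) (hem : Function.Injective em)
    (eo : Fin m' → Fin n) (hdisj : ∀ k j, eo k ≠ em j)
    (v : Fin n → E) (ψ' : AlternatingMap ℝ E W (Fin m))
    (T : (Fin m' → E) → E → E) (Z : W →+ V) (j j0 : Fin m) :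
    ∑ σ : Equiv.Perm (Fin n), ((Equiv.Perm.sign σ : ℤ) : ℝ) •
        Z (ψ' (Function.update (fun a => v (σ (em a))) j
          (T (fun k => v (σ (eo k))) (v (σ (em j)))))) =
    ∑ σ : Equiv.Perm (Fin n), ((Equiv.Perm.sign σ : ℤ) : ℝ) •
        Z (ψ' (Function.update (fun a => v (σ (em a))) j0
          (T (fun k => v (σ (eo k))) (v (σ (em j0)))))) := by
  classical
  by_cases hjj : j = j0
  · rw [hjj]
  set s : Equiv.Perm (Fin m) := Equiv.swap j0 j with hs
  set sh : Equiv.Perm (Fin n) := Equiv.swap (em j0) (em j) with hsh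
  rw [← Equiv.sum_comp (Equiv.mulRight sh) (fun σ : Equiv.Perm (Fin n) =>
    ((Equiv.Perm.sign σ : ℤ) : ℝ) •
        Z (ψ' (Function.update (fun a => v (σ (em a))) j0
          (T (fun k => v (σ (eo k))) (v (σ (em j0)))))))]
  refine Finset.sum_congr rfl fun σ _ => ?_
  simp only [Equiv.coe_mulRight, Equiv.Perm.mul_apply]
  have hsho : ∀ k, sh (eo k) = eo k := fun k =>
    Equiv.swap_apply_of_ne_of_ne (hdisj k j0) (hdisj k j)
  have hshm : ∀ a, sh (em a) = em (s a) := fun a => hem.swap_apply j0 j a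
  have h1 : (fun k => v (σ (sh (eo k)))) = fun k => v (σ (eo k)) := by
    funext k; rw [hsho]
  have h2 : Function.update (fun a => v (σ (sh (em a)))) j0
        (T (fun k => v (σ (eo k))) (v (σ (sh (em j0))))) =
      (Function.update (fun a => v (σ (em a))) j
        (T (fun k => v (σ (eo k))) (v (σ (em j))))) ∘ s := by
    funext a
    rw [Function.comp_apply, Function.update_apply, Function.update_apply]
    have hsj0 : s j0 = j := Equiv.swap_apply_left j0 j
    by_cases ha : a = j0
    · subst ha
      rw [if_pos rfl, if_pos hsj0, hshm, hsj0]
    · rw [if_neg ha, if_neg (fun h : s a = j => ha (by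
        have : s a = s j0 := by rw [h, hsj0]
        exact s.injective this)), hshm]
  rw [h1, h2, AlternatingMap.map_perm]
  have hsgn_s : Equiv.Perm.sign s = -1 := Equiv.Perm.sign_swap (Ne.symm hjj)
  have hsgn_sh : Equiv.Perm.sign (σ * sh) = -(Equiv.Perm.sign σ) := by
    rw [Equiv.Perm.sign_mul, Equiv.Perm.sign_swap (fun h => hjj (hem h).symm), mul_neg_one]
  rw [hsgn_s, hsgn_sh]
  rw [Units.smul_def, map_zsmul]
  push_cast
  simp only [neg_smul, one_smul, smul_neg, neg_neg, Int.reduceNeg]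

lemma finRotate_pow_apply {n : ℕ} (m : ℕ) (i : Fin n) :
    ((finRotate n) ^ m) i = ⟨(i.val + m) % n, Nat.mod_lt _ (by have := i.2; omega)⟩ := by
  induction m with
  | zero => simp [Nat.mod_eq_of_lt i.2]
  | succ k ih =>
    rw [pow_succ', Equiv.Perm.mul_apply, ih]
    cases n with
    | zero => exact i.elim0
    | succ n' =>
      rw [finRotate_succ_apply]
      ext
      simp only [Fin.add_def, Fin.val_one']
      rw [Nat.mod_add_mod, Nat.add_mod_mod, show i.val + k + 1 = i.val + (k + 1) from by omega]

lemma sign_finRotate_pow (n m : ℕ) (hn : 1 ≤ n) :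
    Equiv.Perm.sign ((finRotate n) ^ m) = ((-1) ^ (n - 1)) ^ m := by
  obtain ⟨n', rfl⟩ : ∃ n', n = n' + 1 := ⟨n - 1, by omega⟩
  rw [map_pow, sign_finRotate]



/-- The wedge-type bilinear pairing of (alternating) vector-valued multilinear forms:
`(B^∧(φ)ψ)(v₁,…,v_{p+q}) = (1/(p! q!)) Σ_σ sign(σ) B(φ(v_{σ(1)},…,v_{σ(p)}), ψ(v_{σ(p+1)},…,v_{σ(p+q)}))`.
For `B = [·,·]_𝔤` this is the algebraic bracket `[φ,ψ]^∧`; for `B = ρ` applied to vectors it is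
`ρ^∧(φ)ψ`. -/
noncomputable def wedgeOp {ι g h V : Type*} [AddCommGroup V] [Module ℝ V]
    {p q : ℕ} (B : g → h → V)
    (φ : (Fin p → ι) → g) (ψ : (Fin q → ι) → h) : (Fin (p + q) → ι) → V :=
  fun v => ((p.factorial * q.factorial : ℕ) : ℝ)⁻¹ •
    ∑ σ : Equiv.Perm (Fin (p + q)), ((Equiv.Perm.sign σ : ℤ) : ℝ) •
      B (φ fun i => v (σ (Fin.castAdd q i))) (ψ fun j => v (σ (Fin.natAdd p j)))

/-- The Lie derivative of a `V`-valued `p`-form on the vector space `E` along the vector field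
`ξ`, evaluated on constant vector fields:
`(L_ξ φ)(x)(v₁,…,v_p) = D(y ↦ φ(y)(v))(x)(ξ(x)) + Σᵢ φ(x)(v₁,…,Dξ(x)(vᵢ),…,v_p)`. -/
noncomputable def lieDerivForm {E V : Type*} [NormedAddCommGroup E] [NormedSpace ℝ E]
    [NormedAddCommGroup V] [NormedSpace ℝ V] {p : ℕ}
    (ξ : E → E) (φ : E → (Fin p → E) → V) : E → (Fin p → E) → V :=
  fun x v => fderiv ℝ (fun y => φ y v) x (ξ x) +
    ∑ i : Fin p, φ x (Function.update v i (fderiv ℝ ξ x (v i)))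

/-- The Frölicher-Nijenhuis bracket `[K,L]` of a `TM`-valued `k`-form `K` and a `TM`-valued
`l`-form `L` on the vector space `E`, evaluated on constant vector fields.  This is the
specialization of the global formula
`[K,L](ξ₁,…,ξ_{k+l}) = (1/(k! l!)) Σ_σ sign σ [K(ξ_{σ1},…,ξ_{σk}), L(ξ_{σ(k+1)},…)]`
`  - (1/(k! (l-1)!)) Σ_σ sign σ L([K(ξ_{σ1},…,ξ_{σk}), ξ_{σ(k+1)}], ξ_{σ(k+2)},…)`
`  + ((-1)^{kl}/((k-1)! l!)) Σ_σ sign σ K([L(ξ_{σ1},…,ξ_{σl}), ξ_{σ(l+1)}], ξ_{σ(l+2)},…) + …`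
to constant vector fields `ξᵢ = vᵢ` (for which the last two terms of the global formula vanish
and brackets with constant fields become derivatives), which determines the bracket since it is
tensorial. -/
noncomputable def fnBracket {E : Type*} [NormedAddCommGroup E] [NormedSpace ℝ E]
    (k l : ℕ) (K : E → (Fin k → E) → E) (L : E → (Fin l → E) → E) :
    E → (Fin (k + l) → E) → E := fun x v =>
  ((k.factorial * l.factorial : ℕ) : ℝ)⁻¹ •
    (∑ σ : Equiv.Perm (Fin (k + l)), ((Equiv.Perm.sign σ : ℤ) : ℝ) •
      VectorField.lieBracket ℝ
        (fun y => K y fun i => v (σ (Fin.castAdd l i)))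
        (fun y => L y fun j => v (σ (Fin.natAdd k j))) x) +
  (if hl : 1 ≤ l then
      (-(((k.factorial * (l - 1).factorial : ℕ) : ℝ)⁻¹)) •
        ∑ σ : Equiv.Perm (Fin (k + l)), ((Equiv.Perm.sign σ : ℤ) : ℝ) •
          L x (fun j : Fin l => if (j : ℕ) = 0 then
              -(fderiv ℝ (fun y => K y fun i => v (σ (Fin.castAdd l i))) x
                  (v (σ ⟨k, by omega⟩)))
            else v (σ ⟨k + (j : ℕ), by have := j.2; omega⟩))
    else 0) +
  (if hk : 1 ≤ k then
      ((-1 : ℝ) ^ (k * l) * (((k - 1).factorial * l.factorial : ℕ) : ℝ)⁻¹) •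
        ∑ σ : Equiv.Perm (Fin (k + l)), ((Equiv.Perm.sign σ : ℤ) : ℝ) •
          K x (fun i : Fin k => if (i : ℕ) = 0 then
              -(fderiv ℝ (fun y => L y fun j => v (σ ⟨(j : ℕ), by have := j.2; omega⟩)) x
                  (v (σ ⟨l, by omega⟩)))
            else v (σ ⟨l + (i : ℕ), by have := i.2; omega⟩))
    else 0)

set_option maxHeartbeats 3200000 in
/-- Let `M = E` be a `𝔤`-manifold (the finite-dimensional Lie algebra `𝔤` is
presented by its bilinear bracket `brk`; `ζ` is the action) and let `φ ∈ Ω^p_hor(M;𝔤)^𝔤` and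
`ψ ∈ Ω^q_hor(M;𝔤)^𝔤` be horizontal `𝔤`-equivariant forms.  Then the Frölicher–Nijenhuis
bracket of the associated tangent-bundle-valued forms `ζ_φ, ζ_ψ` satisfies
`[ζ_φ, ζ_ψ] = −ζ_{[φ,ψ]^∧}`: the map `ζ` restricted to basic `𝔤`-valued forms is an
anti-homomorphism of graded Lie algebras. -/
theorem stmt4
    {E 𝔤 : Type*} [NormedAddCommGroup E] [NormedSpace ℝ E]
    [NormedAddCommGroup 𝔤] [NormedSpace ℝ 𝔤] [FiniteDimensional ℝ 𝔤]
    (brk : 𝔤 →ₗ[ℝ] 𝔤 →ₗ[ℝ] 𝔤)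
    (hanti : ∀ X : 𝔤, brk X X = 0)
    (hjac : ∀ X Y Z : 𝔤, brk X (brk Y Z) = brk (brk X Y) Z + brk Y (brk X Z))
    (ζ : 𝔤 → E → E)
    (hζlin : ∀ x : E, IsLinearMap ℝ fun X => ζ X x)
    (hζsmooth : ∀ X, ContDiff ℝ (⊤ : ℕ∞) (ζ X))
    (hζhom : ∀ X Y, VectorField.lieBracket ℝ (ζ X) (ζ Y) = ζ (brk X Y))
    {p q : ℕ}
    (φ : E → AlternatingMap ℝ E 𝔤 (Fin p)) (ψ : E → AlternatingMap ℝ E 𝔤 (Fin q))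
    (hφsmooth : ∀ w, ContDiff ℝ (⊤ : ℕ∞) fun y => φ y w)
    (hψsmooth : ∀ w, ContDiff ℝ (⊤ : ℕ∞) fun y => ψ y w)
    (hφhor : ∀ (X : 𝔤) (y : E) (w : Fin p → E) (i : Fin p), w i = ζ X y → φ y w = 0)
    (hψhor : ∀ (X : 𝔤) (y : E) (w : Fin q → E) (i : Fin q), w i = ζ X y → ψ y w = 0)
    (hφequiv : ∀ X : 𝔤,
      lieDerivForm (ζ X) (fun y w => φ y w) = fun y w => -brk X (φ y w))
    (hψequiv : ∀ X : 𝔤,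
      lieDerivForm (ζ X) (fun y w => ψ y w) = fun y w => -brk X (ψ y w)) :
    ∀ (x : E) (v : Fin (p + q) → E),
      fnBracket p q (fun y w => ζ (φ y w) y) (fun y w => ζ (ψ y w) y) x v =
        -ζ (wedgeOp (fun a b => brk a b) ⇑(φ x) ⇑(ψ x) v) x := by
  intro x v
  classical
  -- differentiability of the coefficient functions
  have hφd : ∀ w : Fin p → E, DifferentiableAt ℝ (fun y => φ y w) x :=
    fun w => ((hφsmooth w).differentiable (by simp)).differentiableAt
  have hψd : ∀ w : Fin q → E, DifferentiableAt ℝ (fun y => ψ y w) x :=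
    fun w => ((hψsmooth w).differentiable (by simp)).differentiableAt
  -- linearity of ζ in the Lie algebra variable, at the point x
  have hζadd : ∀ X Y : 𝔤, ζ (X + Y) x = ζ X x + ζ Y x := fun X Y => (hζlin x).map_add X Y
  have hζneg : ∀ X : 𝔤, ζ (-X) x = -ζ X x := fun X => (hζlin x).map_neg X
  have hζsmul : ∀ (c : ℝ) (X : 𝔤), ζ (c • X) x = c • ζ X x := fun c X => (hζlin x).map_smul c X
  have hζsub : ∀ X Y : 𝔤, ζ (X - Y) x = ζ X x - ζ Y x := by
    intro X Y; rw [sub_eq_add_neg, hζadd, hζneg, sub_eq_add_neg]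
  have hζsum : ∀ {m : ℕ} (f : Fin m → 𝔤), ζ (∑ j, f j) x = ∑ j, ζ (f j) x :=
    fun f => map_sum (IsLinearMap.mk' _ (hζlin x)) f Finset.univ
  have hζsumP : ∀ (f : Equiv.Perm (Fin (p + q)) → 𝔤),
      ζ (∑ σ, f σ) x = ∑ σ, ζ (f σ) x :=
    fun f => map_sum (IsLinearMap.mk' _ (hζlin x)) f Finset.univ
  -- antisymmetry of the bracket
  have hbrk_anti : ∀ X Y : 𝔤, brk Y X = -brk X Y := by
    intro X Y
    have h := hanti (X + Y)
    simp only [map_add, LinearMap.add_apply, hanti X, hanti Y, zero_add, add_zero] at h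
    exact eq_neg_of_add_eq_zero_left h
  -- per-permutation Lie bracket formula
  have key1 : ∀ σ : Equiv.Perm (Fin (p + q)),
      VectorField.lieBracket ℝ (fun y => ζ ((φ y) fun i => v (σ (Fin.castAdd q i))) y)
        (fun y => ζ ((ψ y) fun j => v (σ (Fin.natAdd p j))) y) x
      = -ζ (brk ((φ x) fun i => v (σ (Fin.castAdd q i))) ((ψ x) fun j => v (σ (Fin.natAdd p j)))) x
        - (∑ j : Fin q, ζ ((ψ x) (Function.update (fun j' => v (σ (Fin.natAdd p j'))) j
            (fderiv ℝ (ζ ((φ x) fun i => v (σ (Fin.castAdd q i)))) x (v (σ (Fin.natAdd p j)))))) x)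
        + (∑ i : Fin p, ζ ((φ x) (Function.update (fun i' => v (σ (Fin.castAdd q i'))) i
            (fderiv ℝ (ζ ((ψ x) fun j => v (σ (Fin.natAdd p j)))) x (v (σ (Fin.castAdd q i)))))) x) := by
    intro σ
    set w1 : Fin p → E := fun i => v (σ (Fin.castAdd q i)) with hw1
    set w2 : Fin q → E := fun j => v (σ (Fin.natAdd p j)) with hw2
    obtain ⟨hd1, hf1⟩ := zeta_fderiv hζlin hζsmooth (hφd w1)
    obtain ⟨hd2, hf2⟩ := zeta_fderiv hζlin hζsmooth (hψd w2)
    rw [VectorField.lieBracket, hf1, hf2]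
    have hEQ2 := congrFun (congrFun (hψequiv ((φ x) w1)) x) w2
    have hEQ1 := congrFun (congrFun (hφequiv ((ψ x) w2)) x) w1
    simp only [lieDerivForm] at hEQ2 hEQ1
    have e2 : fderiv ℝ (fun y => (ψ y) w2) x (ζ ((φ x) w1) x)
        = -brk ((φ x) w1) ((ψ x) w2) - ∑ j, (ψ x) (Function.update w2 j
            (fderiv ℝ (ζ ((φ x) w1)) x (w2 j))) := eq_sub_of_add_eq hEQ2
    have e1 : fderiv ℝ (fun y => (φ y) w1) x (ζ ((ψ x) w2) x)
        = brk ((φ x) w1) ((ψ x) w2) - ∑ i, (φ x) (Function.update w1 i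
            (fderiv ℝ (ζ ((ψ x) w2)) x (w1 i))) := by
      have := eq_sub_of_add_eq hEQ1
      rw [this, hbrk_anti, neg_neg]
    rw [e2, e1]
    have hhom := congrFun (hζhom ((φ x) w1) ((ψ x) w2)) x
    rw [VectorField.lieBracket] at hhom
    rw [hζsub, hζsub, hζneg, hζsum, hζsum]
    rw [← hhom]
    abel
  -- summed version of key1
  have hsum1 : ((p.factorial * q.factorial : ℕ) : ℝ)⁻¹ •
        (∑ σ : Equiv.Perm (Fin (p + q)), ((Equiv.Perm.sign σ : ℤ) : ℝ) •
          VectorField.lieBracket ℝ (fun y => ζ ((φ y) fun i => v (σ (Fin.castAdd q i))) y)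
            (fun y => ζ ((ψ y) fun j => v (σ (Fin.natAdd p j))) y) x)
      = -ζ (((p.factorial * q.factorial : ℕ) : ℝ)⁻¹ •
            ∑ σ : Equiv.Perm (Fin (p + q)), ((Equiv.Perm.sign σ : ℤ) : ℝ) •
              brk ((φ x) fun i => v (σ (Fin.castAdd q i))) ((ψ x) fun j => v (σ (Fin.natAdd p j)))) x
        - ((p.factorial * q.factorial : ℕ) : ℝ)⁻¹ •
          (∑ σ : Equiv.Perm (Fin (p + q)), ((Equiv.Perm.sign σ : ℤ) : ℝ) •
            ∑ j : Fin q, ζ ((ψ x) (Function.update (fun j' => v (σ (Fin.natAdd p j'))) j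
              (fderiv ℝ (ζ ((φ x) fun i => v (σ (Fin.castAdd q i)))) x (v (σ (Fin.natAdd p j)))))) x)
        + ((p.factorial * q.factorial : ℕ) : ℝ)⁻¹ •
          (∑ σ : Equiv.Perm (Fin (p + q)), ((Equiv.Perm.sign σ : ℤ) : ℝ) •
            ∑ i : Fin p, ζ ((φ x) (Function.update (fun i' => v (σ (Fin.castAdd q i'))) i
              (fderiv ℝ (ζ ((ψ x) fun j => v (σ (Fin.natAdd p j)))) x (v (σ (Fin.castAdd q i)))))) x) := by
    rw [hζsmul, hζsumP]
    rw [show (∑ σ : Equiv.Perm (Fin (p + q)), ζ (((Equiv.Perm.sign σ : ℤ) : ℝ) •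
          brk ((φ x) fun i => v (σ (Fin.castAdd q i))) ((ψ x) fun j => v (σ (Fin.natAdd p j)))) x)
        = ∑ σ : Equiv.Perm (Fin (p + q)), ((Equiv.Perm.sign σ : ℤ) : ℝ) •
          ζ (brk ((φ x) fun i => v (σ (Fin.castAdd q i))) ((ψ x) fun j => v (σ (Fin.natAdd p j)))) x
      from Finset.sum_congr rfl fun σ _ => hζsmul _ _]
    rw [show (∑ σ : Equiv.Perm (Fin (p + q)), ((Equiv.Perm.sign σ : ℤ) : ℝ) •
          VectorField.lieBracket ℝ (fun y => ζ ((φ y) fun i => v (σ (Fin.castAdd q i))) y)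
            (fun y => ζ ((ψ y) fun j => v (σ (Fin.natAdd p j))) y) x)
        = ∑ σ : Equiv.Perm (Fin (p + q)),
          (-(((Equiv.Perm.sign σ : ℤ) : ℝ) •
              ζ (brk ((φ x) fun i => v (σ (Fin.castAdd q i))) ((ψ x) fun j => v (σ (Fin.natAdd p j)))) x)
            - ((Equiv.Perm.sign σ : ℤ) : ℝ) •
              (∑ j : Fin q, ζ ((ψ x) (Function.update (fun j' => v (σ (Fin.natAdd p j'))) j
                (fderiv ℝ (ζ ((φ x) fun i => v (σ (Fin.castAdd q i)))) x (v (σ (Fin.natAdd p j)))))) x)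
            + ((Equiv.Perm.sign σ : ℤ) : ℝ) •
              (∑ i : Fin p, ζ ((φ x) (Function.update (fun i' => v (σ (Fin.castAdd q i'))) i
                (fderiv ℝ (ζ ((ψ x) fun j => v (σ (Fin.natAdd p j)))) x (v (σ (Fin.castAdd q i)))))) x))
      from Finset.sum_congr rfl fun σ _ => by
        rw [key1 σ, smul_add, smul_sub, smul_neg]]
    rw [Finset.sum_add_distrib, Finset.sum_sub_distrib]
    rw [Finset.sum_neg_distrib]
    rw [smul_add, smul_sub, smul_neg]
  simp only [fnBracket, wedgeOp]
  rw [hsum1]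
  -- injectivity / disjointness of the index embeddings
  have hinjN : Function.Injective (Fin.natAdd p : Fin q → Fin (p + q)) := fun a b h => by
    have := congrArg Fin.val h
    simp only [Fin.coe_natAdd] at this
    exact Fin.ext (by omega)
  have hinjC : Function.Injective (Fin.castAdd q : Fin p → Fin (p + q)) := fun a b h => by
    have := congrArg Fin.val h
    simp only [Fin.coe_castAdd] at this
    exact Fin.ext this
  have hdisjCN : ∀ (k : Fin p) (j : Fin q), Fin.castAdd q k ≠ Fin.natAdd p j := by
    intro k j h
    have := congrArg Fin.val h
    simp only [Fin.coe_castAdd, Fin.coe_natAdd] at this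
    have := k.2; omega
  have hdisjNC : ∀ (k : Fin q) (j : Fin p), Fin.natAdd p k ≠ Fin.castAdd q j :=
    fun k j h => hdisjCN j k h.symm
  set Zx : 𝔤 →+ E := AddMonoidHom.mk' (fun X => ζ X x) (hζlin x).map_add with hZx
  -- the second term of the FN bracket
  have hT2 : ∀ _ : 1 ≤ q,
      (-(((p.factorial * (q - 1).factorial : ℕ) : ℝ)⁻¹)) •
        ∑ σ : Equiv.Perm (Fin (p + q)), ((Equiv.Perm.sign σ : ℤ) : ℝ) •
          ζ ((ψ x) fun j : Fin q =>
              if (j : ℕ) = 0 then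
                -(fderiv ℝ (fun y => ζ ((φ y) fun i => v (σ (Fin.castAdd q i))) y) x)
                  (v (σ ⟨p, by omega⟩))
              else v (σ ⟨p + (j : ℕ), by have := j.2; omega⟩)) x
      = ((p.factorial * q.factorial : ℕ) : ℝ)⁻¹ •
        ∑ σ : Equiv.Perm (Fin (p + q)), ((Equiv.Perm.sign σ : ℤ) : ℝ) •
          ∑ j : Fin q, ζ ((ψ x) (Function.update (fun j' => v (σ (Fin.natAdd p j'))) j
            (fderiv ℝ (ζ ((φ x) fun i => v (σ (Fin.castAdd q i)))) x (v (σ (Fin.natAdd p j)))))) x := by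
    intro hq
    set j0 : Fin q := ⟨0, hq⟩ with hj0
    -- per-σ reduction of the left-hand summand
    have hper : ∀ σ : Equiv.Perm (Fin (p + q)),
        ζ ((ψ x) fun j : Fin q =>
            if (j : ℕ) = 0 then
              -(fderiv ℝ (fun y => ζ ((φ y) fun i => v (σ (Fin.castAdd q i))) y) x)
                (v (σ ⟨p, by omega⟩))
            else v (σ ⟨p + (j : ℕ), by have := j.2; omega⟩)) x
        = -ζ ((ψ x) (Function.update (fun j' => v (σ (Fin.natAdd p j'))) j0
            (fderiv ℝ (ζ ((φ x) fun i => v (σ (Fin.castAdd q i)))) x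
              (v (σ (Fin.natAdd p j0)))))) x := by
      intro σ
      have hD := (zeta_fderiv hζlin hζsmooth (hφd (fun i => v (σ (Fin.castAdd q i))))).2
        (v (σ (Fin.natAdd p j0)))
      have hfun : (fun j : Fin q =>
            if (j : ℕ) = 0 then
              -(fderiv ℝ (fun y => ζ ((φ y) fun i => v (σ (Fin.castAdd q i))) y) x)
                (v (σ ⟨p, by omega⟩))
            else v (σ ⟨p + (j : ℕ), by have := j.2; omega⟩))
          = Function.update (fun j' => v (σ (Fin.natAdd p j'))) j0
              (-(fderiv ℝ (fun y => ζ ((φ y) fun i => v (σ (Fin.castAdd q i))) y) x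
                (v (σ (Fin.natAdd p j0))))) := by
        funext j
        by_cases hj : (j : ℕ) = 0
        · have hjj : j = j0 := Fin.ext hj
          subst hjj
          rw [if_pos rfl, Function.update_self]
          rfl
        · rw [if_neg hj, Function.update_of_ne (fun h => hj (by rw [h]))]
          rfl
      rw [hfun]
      have hsplit : -(fderiv ℝ (fun y => ζ ((φ y) fun i => v (σ (Fin.castAdd q i))) y) x
            (v (σ (Fin.natAdd p j0))))
          = ζ (-(fderiv ℝ (fun y => (φ y) fun i => v (σ (Fin.castAdd q i))) x
              (v (σ (Fin.natAdd p j0))))) x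
            + -(fderiv ℝ (ζ ((φ x) fun i => v (σ (Fin.castAdd q i)))) x
              (v (σ (Fin.natAdd p j0)))) := by
        rw [hD, hζneg]
        abel
      rw [hsplit, (ψ x).map_update_add]
      have h0 : (ψ x) (Function.update (fun j' => v (σ (Fin.natAdd p j'))) j0
          (ζ (-(fderiv ℝ (fun y => (φ y) fun i => v (σ (Fin.castAdd q i))) x
            (v (σ (Fin.natAdd p j0))))) x)) = 0 :=
        hψhor _ x _ j0 (Function.update_self _ _ _)
      rw [h0, zero_add, (ψ x).map_update_neg, hζneg]
    have hL : (∑ σ : Equiv.Perm (Fin (p + q)), ((Equiv.Perm.sign σ : ℤ) : ℝ) •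
          ζ ((ψ x) fun j : Fin q =>
              if (j : ℕ) = 0 then
                -(fderiv ℝ (fun y => ζ ((φ y) fun i => v (σ (Fin.castAdd q i))) y) x)
                  (v (σ ⟨p, by omega⟩))
              else v (σ ⟨p + (j : ℕ), by have := j.2; omega⟩)) x)
        = -∑ σ : Equiv.Perm (Fin (p + q)), ((Equiv.Perm.sign σ : ℤ) : ℝ) •
            ζ ((ψ x) (Function.update (fun j' => v (σ (Fin.natAdd p j'))) j0
              (fderiv ℝ (ζ ((φ x) fun i => v (σ (Fin.castAdd q i)))) x
                (v (σ (Fin.natAdd p j0)))))) x := by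
      rw [← Finset.sum_neg_distrib]
      exact Finset.sum_congr rfl fun σ _ => by rw [hper σ, smul_neg]
    have hswap : ∀ j : Fin q,
        (∑ σ : Equiv.Perm (Fin (p + q)), ((Equiv.Perm.sign σ : ℤ) : ℝ) •
          ζ ((ψ x) (Function.update (fun j' => v (σ (Fin.natAdd p j'))) j
            (fderiv ℝ (ζ ((φ x) fun i => v (σ (Fin.castAdd q i)))) x
              (v (σ (Fin.natAdd p j)))))) x)
        = ∑ σ : Equiv.Perm (Fin (p + q)), ((Equiv.Perm.sign σ : ℤ) : ℝ) •
            ζ ((ψ x) (Function.update (fun j' => v (σ (Fin.natAdd p j'))) j0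
              (fderiv ℝ (ζ ((φ x) fun i => v (σ (Fin.castAdd q i)))) x
                (v (σ (Fin.natAdd p j0)))))) x :=
      fun j => key_swap (Fin.natAdd p) hinjN (Fin.castAdd q) hdisjCN v (ψ x)
        (fun w u => fderiv ℝ (ζ ((φ x) w)) x u) Zx j j0
    have hR : (∑ σ : Equiv.Perm (Fin (p + q)), ((Equiv.Perm.sign σ : ℤ) : ℝ) •
          ∑ j : Fin q, ζ ((ψ x) (Function.update (fun j' => v (σ (Fin.natAdd p j'))) j
            (fderiv ℝ (ζ ((φ x) fun i => v (σ (Fin.castAdd q i)))) x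
              (v (σ (Fin.natAdd p j)))))) x)
        = q • ∑ σ : Equiv.Perm (Fin (p + q)), ((Equiv.Perm.sign σ : ℤ) : ℝ) •
            ζ ((ψ x) (Function.update (fun j' => v (σ (Fin.natAdd p j'))) j0
              (fderiv ℝ (ζ ((φ x) fun i => v (σ (Fin.castAdd q i)))) x
                (v (σ (Fin.natAdd p j0)))))) x := by
      rw [show (∑ σ : Equiv.Perm (Fin (p + q)), ((Equiv.Perm.sign σ : ℤ) : ℝ) •
            ∑ j : Fin q, ζ ((ψ x) (Function.update (fun j' => v (σ (Fin.natAdd p j'))) j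
              (fderiv ℝ (ζ ((φ x) fun i => v (σ (Fin.castAdd q i)))) x
                (v (σ (Fin.natAdd p j)))))) x)
          = ∑ σ : Equiv.Perm (Fin (p + q)), ∑ j : Fin q, ((Equiv.Perm.sign σ : ℤ) : ℝ) •
              ζ ((ψ x) (Function.update (fun j' => v (σ (Fin.natAdd p j'))) j
                (fderiv ℝ (ζ ((φ x) fun i => v (σ (Fin.castAdd q i)))) x
                  (v (σ (Fin.natAdd p j)))))) x
        from Finset.sum_congr rfl fun σ _ => Finset.smul_sum]
      rw [Finset.sum_comm]
      rw [Finset.sum_congr rfl fun j (_ : j ∈ Finset.univ) => hswap j]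
      rw [Finset.sum_const, Finset.card_univ, Fintype.card_fin]
    rw [hL, hR, smul_neg, neg_smul, neg_neg]
    rw [← Nat.cast_smul_eq_nsmul ℝ, smul_smul]
    congr 1
    have h1 : (p.factorial : ℝ) ≠ 0 := Nat.cast_ne_zero.mpr p.factorial_ne_zero
    have h2 : ((q - 1).factorial : ℝ) ≠ 0 := Nat.cast_ne_zero.mpr (q - 1).factorial_ne_zero
    have h3 : q.factorial = q * (q - 1).factorial := by
      obtain ⟨q', rfl⟩ : ∃ q', q = q' + 1 := ⟨q - 1, by omega⟩
      simp [Nat.factorial_succ]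
    rw [h3]
    push_cast
    have hq0 : (q : ℝ) ≠ 0 := Nat.cast_ne_zero.mpr (by omega)
    field_simp
  -- the third term of the FN bracket
  have hT3 : ∀ _ : 1 ≤ p,
      ((-1 : ℝ) ^ (p * q) * (((p - 1).factorial * q.factorial : ℕ) : ℝ)⁻¹) •
        ∑ σ : Equiv.Perm (Fin (p + q)), ((Equiv.Perm.sign σ : ℤ) : ℝ) •
          ζ ((φ x) fun i : Fin p =>
              if (i : ℕ) = 0 then
                -(fderiv ℝ (fun y => ζ ((ψ y) fun j => v (σ ⟨(j : ℕ), by have := j.2; omega⟩)) y) x)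
                  (v (σ ⟨q, by omega⟩))
              else v (σ ⟨q + (i : ℕ), by have := i.2; omega⟩)) x
      = -(((p.factorial * q.factorial : ℕ) : ℝ)⁻¹ •
          ∑ σ : Equiv.Perm (Fin (p + q)), ((Equiv.Perm.sign σ : ℤ) : ℝ) •
            ∑ i : Fin p, ζ ((φ x) (Function.update (fun i' => v (σ (Fin.castAdd q i'))) i
              (fderiv ℝ (ζ ((ψ x) fun j => v (σ (Fin.natAdd p j)))) x (v (σ (Fin.castAdd q i)))))) x) := by
    intro hp
    set i0 : Fin p := ⟨0, hp⟩ with hi0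
    set r : Equiv.Perm (Fin (p + q)) := (finRotate (p + q)) ^ q with hr
    have hr1 : ∀ i : Fin p, r (Fin.castAdd q i) = ⟨q + (i : ℕ), by have := i.2; omega⟩ := by
      intro i
      rw [hr, finRotate_pow_apply]
      ext
      simp only [Fin.coe_castAdd]
      rw [Nat.mod_eq_of_lt (by have := i.2; omega)]
      omega
    have hr2 : ∀ j : Fin q, r (Fin.natAdd p j) = ⟨(j : ℕ), by have := j.2; omega⟩ := by
      intro j
      rw [hr, finRotate_pow_apply]
      ext
      simp only [Fin.coe_natAdd]
      rw [show p + (j : ℕ) + q = (j : ℕ) + (p + q) from by omega, Nat.add_mod_right,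
        Nat.mod_eq_of_lt (by have := j.2; omega)]
    have hsr : ((Equiv.Perm.sign r : ℤ) : ℝ) = (-1 : ℝ) ^ (p * q) := by
      rw [hr, sign_finRotate_pow _ _ (by omega)]
      simp only [Units.val_pow_eq_pow_val, Units.val_neg, Units.val_one, Int.cast_pow,
        Int.cast_neg, Int.cast_one]
      rw [← pow_mul]
      rcases Nat.eq_zero_or_pos q with hq0 | hq0
      · subst hq0; simp
      · rw [show (p + q - 1) * q = p * q + (q - 1) * q from by
          rw [show p + q - 1 = p + (q - 1) from by omega, Nat.add_mul]]
        rw [pow_add]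
        have he : Even ((q - 1) * q) := by
          have h := Nat.even_mul_succ_self (q - 1)
          rwa [show q - 1 + 1 = q from by omega] at h
        rw [he.neg_one_pow, mul_one]
    have hper3 : ∀ σ : Equiv.Perm (Fin (p + q)),
        ζ ((φ x) fun i : Fin p =>
            if (i : ℕ) = 0 then
              -(fderiv ℝ (fun y => ζ ((ψ y) fun j => v (σ ⟨(j : ℕ), by have := j.2; omega⟩)) y) x)
                (v (σ ⟨q, by omega⟩))
            else v (σ ⟨q + (i : ℕ), by have := i.2; omega⟩)) x
        = -ζ ((φ x) (Function.update
            (fun a : Fin p => v (σ ⟨q + (a : ℕ), by have := a.2; omega⟩)) i0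
            (fderiv ℝ (ζ ((ψ x) fun j => v (σ ⟨(j : ℕ), by have := j.2; omega⟩))) x
              (v (σ ⟨q, by omega⟩))))) x := by
      intro σ
      have hD := (zeta_fderiv hζlin hζsmooth
        (hψd (fun j => v (σ ⟨(j : ℕ), by have := j.2; omega⟩)))).2 (v (σ ⟨q, by omega⟩))
      have hfun : (fun i : Fin p =>
            if (i : ℕ) = 0 then
              -(fderiv ℝ (fun y => ζ ((ψ y) fun j => v (σ ⟨(j : ℕ), by have := j.2; omega⟩)) y) x)
                (v (σ ⟨q, by omega⟩))
            else v (σ ⟨q + (i : ℕ), by have := i.2; omega⟩))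
          = Function.update (fun a : Fin p => v (σ ⟨q + (a : ℕ), by have := a.2; omega⟩)) i0
              (-(fderiv ℝ (fun y => ζ ((ψ y) fun j => v (σ ⟨(j : ℕ), by have := j.2; omega⟩)) y) x
                (v (σ ⟨q, by omega⟩)))) := by
        funext i
        by_cases hi : (i : ℕ) = 0
        · have hii : i = i0 := Fin.ext hi
          subst hii
          rw [if_pos rfl, Function.update_self]
        · rw [if_neg hi, Function.update_of_ne (fun h => hi (by rw [h]))]
      rw [hfun]
      have hsplit : -(fderiv ℝ (fun y => ζ ((ψ y) fun j => v (σ ⟨(j : ℕ), by have := j.2; omega⟩)) y) x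
            (v (σ ⟨q, by omega⟩)))
          = ζ (-(fderiv ℝ (fun y => (ψ y) fun j => v (σ ⟨(j : ℕ), by have := j.2; omega⟩)) x
              (v (σ ⟨q, by omega⟩)))) x
            + -(fderiv ℝ (ζ ((ψ x) fun j => v (σ ⟨(j : ℕ), by have := j.2; omega⟩))) x
              (v (σ ⟨q, by omega⟩))) := by
        rw [hD, hζneg]
        abel
      rw [hsplit, (φ x).map_update_add]
      have h0 : (φ x) (Function.update
          (fun a : Fin p => v (σ ⟨q + (a : ℕ), by have := a.2; omega⟩)) i0
          (ζ (-(fderiv ℝ (fun y => (ψ y) fun j => v (σ ⟨(j : ℕ), by have := j.2; omega⟩)) x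
            (v (σ ⟨q, by omega⟩)))) x)) = 0 :=
        hφhor _ x _ i0 (Function.update_self _ _ _)
      rw [h0, zero_add, (φ x).map_update_neg, hζneg]
    have hswap3 : ∀ i : Fin p,
        (∑ σ : Equiv.Perm (Fin (p + q)), ((Equiv.Perm.sign σ : ℤ) : ℝ) •
          ζ ((φ x) (Function.update (fun i' => v (σ (Fin.castAdd q i'))) i
            (fderiv ℝ (ζ ((ψ x) fun j => v (σ (Fin.natAdd p j)))) x
              (v (σ (Fin.castAdd q i)))))) x)
        = ∑ σ : Equiv.Perm (Fin (p + q)), ((Equiv.Perm.sign σ : ℤ) : ℝ) •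
            ζ ((φ x) (Function.update (fun i' => v (σ (Fin.castAdd q i'))) i0
              (fderiv ℝ (ζ ((ψ x) fun j => v (σ (Fin.natAdd p j)))) x
                (v (σ (Fin.castAdd q i0)))))) x :=
      fun i => key_swap (Fin.castAdd q) hinjC (Fin.natAdd p) hdisjNC v (φ x)
        (fun w u => fderiv ℝ (ζ ((ψ x) w)) x u) Zx i i0
    have hrot : (∑ σ : Equiv.Perm (Fin (p + q)), ((Equiv.Perm.sign σ : ℤ) : ℝ) •
          ζ ((φ x) (Function.update (fun i' => v (σ (Fin.castAdd q i'))) i0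
            (fderiv ℝ (ζ ((ψ x) fun j => v (σ (Fin.natAdd p j)))) x
              (v (σ (Fin.castAdd q i0)))))) x)
        = ((-1 : ℝ) ^ (p * q)) •
            ∑ σ : Equiv.Perm (Fin (p + q)), ((Equiv.Perm.sign σ : ℤ) : ℝ) •
              ζ ((φ x) (Function.update
                (fun a : Fin p => v (σ ⟨q + (a : ℕ), by have := a.2; omega⟩)) i0
                (fderiv ℝ (ζ ((ψ x) fun j => v (σ ⟨(j : ℕ), by have := j.2; omega⟩))) x
                  (v (σ ⟨q, by omega⟩))))) x := by
      rw [← Equiv.sum_comp (Equiv.mulRight r) (fun σ : Equiv.Perm (Fin (p + q)) =>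
        ((Equiv.Perm.sign σ : ℤ) : ℝ) •
          ζ ((φ x) (Function.update (fun i' => v (σ (Fin.castAdd q i'))) i0
            (fderiv ℝ (ζ ((ψ x) fun j => v (σ (Fin.natAdd p j)))) x
              (v (σ (Fin.castAdd q i0)))))) x)]
      rw [Finset.smul_sum]
      refine Finset.sum_congr rfl fun σ _ => ?_
      simp only [Equiv.coe_mulRight, Equiv.Perm.mul_apply]
      have h1 : (fun i' : Fin p => v (σ (r (Fin.castAdd q i'))))
          = fun a : Fin p => v (σ ⟨q + (a : ℕ), by have := a.2; omega⟩) := by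
        funext a
        rw [hr1]
      have h2 : (fun j : Fin q => v (σ (r (Fin.natAdd p j))))
          = fun j : Fin q => v (σ ⟨(j : ℕ), by have := j.2; omega⟩) := by
        funext j
        rw [hr2]
      rw [h1, h2, hr1 i0]
      rw [show (⟨q + ((i0 : Fin p) : ℕ), by have := i0.2; omega⟩ : Fin (p + q))
          = ⟨q, by omega⟩ from by ext; simp [hi0]]
      rw [Equiv.Perm.sign_mul]
      push_cast
      rw [mul_comm, mul_smul, hsr]
    have hLred : (∑ σ : Equiv.Perm (Fin (p + q)), ((Equiv.Perm.sign σ : ℤ) : ℝ) •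
          ζ ((φ x) fun i : Fin p =>
              if (i : ℕ) = 0 then
                -(fderiv ℝ (fun y => ζ ((ψ y) fun j => v (σ ⟨(j : ℕ), by have := j.2; omega⟩)) y) x)
                  (v (σ ⟨q, by omega⟩))
              else v (σ ⟨q + (i : ℕ), by have := i.2; omega⟩)) x)
        = -∑ σ : Equiv.Perm (Fin (p + q)), ((Equiv.Perm.sign σ : ℤ) : ℝ) •
            ζ ((φ x) (Function.update
              (fun a : Fin p => v (σ ⟨q + (a : ℕ), by have := a.2; omega⟩)) i0
              (fderiv ℝ (ζ ((ψ x) fun j => v (σ ⟨(j : ℕ), by have := j.2; omega⟩))) x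
                (v (σ ⟨q, by omega⟩))))) x := by
      rw [← Finset.sum_neg_distrib]
      exact Finset.sum_congr rfl fun σ _ => by rw [hper3 σ, smul_neg]
    have hRfold : (∑ σ : Equiv.Perm (Fin (p + q)), ((Equiv.Perm.sign σ : ℤ) : ℝ) •
          ∑ i : Fin p, ζ ((φ x) (Function.update (fun i' => v (σ (Fin.castAdd q i'))) i
            (fderiv ℝ (ζ ((ψ x) fun j => v (σ (Fin.natAdd p j)))) x
              (v (σ (Fin.castAdd q i)))))) x)
        = p • ∑ σ : Equiv.Perm (Fin (p + q)), ((Equiv.Perm.sign σ : ℤ) : ℝ) •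
            ζ ((φ x) (Function.update (fun i' => v (σ (Fin.castAdd q i'))) i0
              (fderiv ℝ (ζ ((ψ x) fun j => v (σ (Fin.natAdd p j)))) x
                (v (σ (Fin.castAdd q i0)))))) x := by
      rw [show (∑ σ : Equiv.Perm (Fin (p + q)), ((Equiv.Perm.sign σ : ℤ) : ℝ) •
            ∑ i : Fin p, ζ ((φ x) (Function.update (fun i' => v (σ (Fin.castAdd q i'))) i
              (fderiv ℝ (ζ ((ψ x) fun j => v (σ (Fin.natAdd p j)))) x
                (v (σ (Fin.castAdd q i)))))) x)
          = ∑ σ : Equiv.Perm (Fin (p + q)), ∑ i : Fin p, ((Equiv.Perm.sign σ : ℤ) : ℝ) •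
              ζ ((φ x) (Function.update (fun i' => v (σ (Fin.castAdd q i'))) i
                (fderiv ℝ (ζ ((ψ x) fun j => v (σ (Fin.natAdd p j)))) x
                  (v (σ (Fin.castAdd q i)))))) x
        from Finset.sum_congr rfl fun σ _ => Finset.smul_sum]
      rw [Finset.sum_comm]
      rw [Finset.sum_congr rfl fun i (_ : i ∈ Finset.univ) => hswap3 i]
      rw [Finset.sum_const, Finset.card_univ, Fintype.card_fin]
    rw [hLred, hRfold, hrot, smul_neg, ← Nat.cast_smul_eq_nsmul ℝ p, smul_smul, smul_smul,
      neg_inj]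
    congr 1
    have h3 : p.factorial = p * (p - 1).factorial := by
      obtain ⟨p', rfl⟩ : ∃ p', p = p' + 1 := ⟨p - 1, by omega⟩
      simp [Nat.factorial_succ]
    rw [h3]
    push_cast
    have h1 : ((p - 1).factorial : ℝ) ≠ 0 := Nat.cast_ne_zero.mpr (p - 1).factorial_ne_zero
    have h2 : (q.factorial : ℝ) ≠ 0 := Nat.cast_ne_zero.mpr q.factorial_ne_zero
    have hp0 : (p : ℝ) ≠ 0 := Nat.cast_ne_zero.mpr (by omega)
    field_simp
  by_cases hq : 1 ≤ q
  · rw [dif_pos hq, hT2 hq]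
    by_cases hp : 1 ≤ p
    · rw [dif_pos hp, hT3 hp]
      abel
    · rw [dif_neg hp]
      obtain rfl : p = 0 := by omega
      simp only [Finset.univ_eq_empty, Finset.sum_empty, smul_zero, Finset.sum_const_zero,
        add_zero]
      abel
  · rw [dif_neg hq]
    obtain rfl : q = 0 := by omega
    by_cases hp : 1 ≤ p
    · rw [dif_pos hp, hT3 hp]
      simp only [Finset.univ_eq_empty, Finset.sum_empty, smul_zero, Finset.sum_const_zero,
        add_zero]
      abel
    · rw [dif_neg hp]
      obtain rfl : p = 0 := by omega
      simp only [Finset.univ_eq_empty, Finset.sum_empty, smul_zero, Finset.sum_const_zero,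
        add_zero]
      abel
end

section
/- Let ω ∈ Ω^1(M;𝔤)^𝔤 be a principal connection form on a 𝔤-manifold M with curvature form Ω = dω + (1/2)[ω,ω]^∧. Then for each X ∈ 𝔤, i(ζ_X)Ω = [ω(ζ_X) − X, ω]^∧ − d(ω(ζ_X) − X). In particular if the 𝔤-action is free (so ω(ζ_X) = X), then Ω is horizontal. -/
/-- The exterior derivative of a `V`-valued `p`-form on the vector space `E`, evaluated on
constant vector fields: `dφ(x)(v₀,…,v_p) = Σᵢ (-1)ⁱ D(y ↦ φ(y)(v₀,…,v̂ᵢ,…,v_p))(x)(vᵢ)`. -/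
noncomputable def extDer {E V : Type*} [NormedAddCommGroup E] [NormedSpace ℝ E]
    [NormedAddCommGroup V] [NormedSpace ℝ V] {p : ℕ}
    (φ : E → (Fin p → E) → V) : E → (Fin (p + 1) → E) → V :=
  fun x v => ∑ i : Fin (p + 1),
    (-1 : ℝ) ^ (i : ℕ) • fderiv ℝ (fun y => φ y (v ∘ i.succAbove)) x (v i)

/-- Let `ω ∈ Ω^1(M;𝔤)^𝔤` be a principal connection form on the `𝔤`-manifold
`M = E` (equivariance `L_{ζ_X}ω = −ad(X)∘ω` and `ζ ∘ ω ∘ ζ = ζ`), with curvature form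
`Ω = dω + (1/2)[ω,ω]^∧`.  Then for each `X ∈ 𝔤`,
`i(ζ_X)Ω = [ω(ζ_X) − X, ω]^∧ − d(ω(ζ_X) − X)`.
In particular, if the `𝔤`-action is free then `Ω` is horizontal. -/
theorem stmt9
    {E 𝔤 : Type*} [NormedAddCommGroup E] [NormedSpace ℝ E]
    [NormedAddCommGroup 𝔤] [NormedSpace ℝ 𝔤] [FiniteDimensional ℝ 𝔤]
    (brk : 𝔤 →ₗ[ℝ] 𝔤 →ₗ[ℝ] 𝔤)
    (hanti : ∀ X : 𝔤, brk X X = 0)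
    (hjac : ∀ X Y Z : 𝔤, brk X (brk Y Z) = brk (brk X Y) Z + brk Y (brk X Z))
    (ζ : 𝔤 → E → E)
    (hζlin : ∀ x : E, IsLinearMap ℝ fun X => ζ X x)
    (hζsmooth : ∀ X, ContDiff ℝ (⊤ : ℕ∞) (ζ X))
    (hζhom : ∀ X Y, VectorField.lieBracket ℝ (ζ X) (ζ Y) = ζ (brk X Y))
    (ω : E → E →L[ℝ] 𝔤)
    (hωsmooth : ContDiff ℝ (⊤ : ℕ∞) ω)
    (hωequiv : ∀ X : 𝔤,
      lieDerivForm (ζ X) (fun y (w : Fin 1 → E) => ω y (w 0)) =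
        fun y w => -brk X (ω y (w 0)))
    (hωconn : ∀ (x : E) (X : 𝔤), ζ (ω x (ζ X x)) x = ζ X x) :
    (∀ (X : 𝔤) (x : E) (u : E),
      (extDer (fun y (w : Fin 1 → E) => ω y (w 0)) x ![ζ X x, u] +
          (1 / 2 : ℝ) • wedgeOp (fun a b => brk a b)
            (fun w : Fin 1 → E => ω x (w 0)) (fun w : Fin 1 → E => ω x (w 0)) ![ζ X x, u]) =
        brk (ω x (ζ X x) - X) (ω x u) -
          fderiv ℝ (fun y => ω y (ζ X y) - X) x u) ∧
    ((∀ x : E, Function.Injective fun X : 𝔤 => ζ X x) →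
      ∀ (X : 𝔤) (x : E) (u : E),
        extDer (fun y (w : Fin 1 → E) => ω y (w 0)) x ![ζ X x, u] +
          (1 / 2 : ℝ) • wedgeOp (fun a b => brk a b)
            (fun w : Fin 1 → E => ω x (w 0)) (fun w : Fin 1 → E => ω x (w 0)) ![ζ X x, u] = 0) := by
  classical
  have key : ∀ (X : 𝔤) (x : E) (u : E),
      (extDer (fun y (w : Fin 1 → E) => ω y (w 0)) x ![ζ X x, u] +
          (1 / 2 : ℝ) • wedgeOp (fun a b => brk a b)
            (fun w : Fin 1 → E => ω x (w 0)) (fun w : Fin 1 → E => ω x (w 0)) ![ζ X x, u]) =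
        brk (ω x (ζ X x) - X) (ω x u) -
          fderiv ℝ (fun y => ω y (ζ X y) - X) x u := by
    intro X x u
    have hωd : DifferentiableAt ℝ ω x := (hωsmooth.differentiable (by simp)) x
    have hζd : DifferentiableAt ℝ (ζ X) x := ((hζsmooth X).differentiable (by simp)) x
    -- exterior derivative term
    have hext : extDer (fun y (w : Fin 1 → E) => ω y (w 0)) x ![ζ X x, u]
        = fderiv ℝ (fun y => ω y u) x (ζ X x) - fderiv ℝ (fun y => ω y (ζ X x)) x u := by
      rw [extDer, Fin.sum_univ_two]
      have h0 : (0 : Fin 2).succAbove = (fun _ => 1) := by decide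
      have h1 : (1 : Fin 2).succAbove = (fun _ => 0) := by decide
      simp [h0, h1, Function.comp_def]
      abel
    -- wedge term
    have hwedge : wedgeOp (fun a b => brk a b)
          (fun w : Fin 1 → E => ω x (w 0)) (fun w : Fin 1 → E => ω x (w 0)) ![ζ X x, u]
        = brk (ω x (ζ X x)) (ω x u) - brk (ω x u) (ω x (ζ X x)) := by
      have huniv : (Finset.univ : Finset (Equiv.Perm (Fin 2))) = {1, Equiv.swap 0 1} := by
        decide
      rw [wedgeOp, huniv, Finset.sum_pair (by decide)]
      simp [Equiv.Perm.sign_swap (by decide : (0:Fin 2) ≠ 1), Equiv.swap_apply_left,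
        Equiv.swap_apply_right, Fin.castAdd, Fin.natAdd, sub_eq_add_neg]
    -- antisymmetry of the bracket
    have hskew : ∀ a b : 𝔤, brk a b = - brk b a := by
      intro a b
      have h := hanti (a + b)
      simp only [map_add, LinearMap.add_apply, hanti, zero_add, add_zero] at h
      exact eq_neg_of_add_eq_zero_right h
    -- equivariance at (x, u)
    have hequiv := congrFun (congrFun (hωequiv X) x) (fun _ => u)
    simp only [lieDerivForm, Fin.sum_univ_one, Function.update_self] at hequiv
    -- product rule
    have hprod : fderiv ℝ (fun y => ω y (ζ X y)) x =
        (ω x).comp (fderiv ℝ (ζ X) x) + (fderiv ℝ ω x).flip (ζ X x) :=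
      fderiv_clm_apply hωd hζd
    have hconst : fderiv ℝ (fun y => ω y (ζ X x)) x = (fderiv ℝ ω x).flip (ζ X x) := by
      rw [fderiv_clm_apply hωd (differentiableAt_const _), fderiv_fun_const]
      simp
    have hsub : fderiv ℝ (fun y => ω y (ζ X y) - X) x =
        fderiv ℝ (fun y => ω y (ζ X y)) x := fderiv_sub_const X
    rw [hext, hwedge, hsub, hprod, hconst]
    have h2 : brk (ω x (ζ X x)) (ω x u) - brk (ω x u) (ω x (ζ X x)) =
        (2 : ℝ) • brk (ω x (ζ X x)) (ω x u) := by
      rw [hskew (ω x u) (ω x (ζ X x))]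
      module
    rw [h2, smul_smul]
    norm_num only
    have hflip : ((fderiv ℝ ω x).flip (ζ X x)) u = fderiv ℝ ω x u (ζ X x) := rfl
    simp only [ContinuousLinearMap.add_apply, ContinuousLinearMap.comp_apply, hflip,
      map_sub, LinearMap.sub_apply]
    have heq : fderiv ℝ (fun y => ω y u) x (ζ X x) = -brk X (ω x u) - ω x (fderiv ℝ (ζ X) x u) := by
      rw [← hequiv]; abel
    rw [heq]
    module
  refine ⟨key, ?_⟩
  intro hfree X x u
  rw [key]
  have hzero : (fun y : E => ω y (ζ X y) - X) = fun _ => (0 : 𝔤) := by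
    funext y
    rw [hfree y (hωconn y X), sub_self]
  rw [hfree x (hωconn x X), sub_self, map_zero, LinearMap.zero_apply, hzero, fderiv_fun_const]
  simp
end

section
/- A 𝔤-valued 1-form κ on a manifold M with κ_x : T_xM → 𝔤 a linear isomorphism for each x satisfies the Maurer–Cartan equation dκ + (1/2)[κ,κ]^∧ = 0 if and only if the pointwise inverse ζ := κ⁻¹ : 𝔤 → X(M) is a Lie algebra homomorphism. In this case κ is 𝔤-equivariant: L_{ζ_X}κ = −ad(X) ∘ κ for all X ∈ 𝔤. -/
section Aux

variable {E 𝔤 : Type*} [NormedAddCommGroup E] [NormedSpace ℝ E] [FiniteDimensional ℝ E]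
    [NormedAddCommGroup 𝔤] [NormedSpace ℝ 𝔤] [FiniteDimensional ℝ 𝔤]

theorem aux_zeta_smooth (κ : E → E →L[ℝ] 𝔤) (hκsmooth : ContDiff ℝ (⊤ : ℕ∞) κ)
    (ζ : 𝔤 → E → E)
    (hζκ : ∀ (x : E) (v : E), ζ (κ x v) x = v)
    (hκζ : ∀ (x : E) (X : 𝔤), κ x (ζ X x) = X) (X : 𝔤) (x : E) :
    DifferentiableAt ℝ (ζ X) x := by
  have hbij : ∀ y, Function.Bijective (κ y) := by
    intro y
    exact ⟨Function.LeftInverse.injective (g := fun X => ζ X y) (hζκ y),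
      fun X => ⟨ζ X y, hκζ y X⟩⟩
  let e : E → (E ≃L[ℝ] 𝔤) := fun y =>
    (LinearEquiv.ofBijective ((κ y) : E →ₗ[ℝ] 𝔤) (hbij y)).toContinuousLinearEquiv
  have hcoe : ∀ y, ((e y) : E →L[ℝ] 𝔤) = κ y := by
    intro y; ext v; rfl
  have hζ_eq : ∀ (Y : 𝔤) (y : E), ζ Y y = ContinuousLinearMap.inverse (κ y) Y := by
    intro Y y
    rw [← hcoe y, ContinuousLinearMap.inverse_equiv]
    apply (hbij y).1
    rw [hκζ y Y, ← hcoe y]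
    simp
  have : DifferentiableAt ℝ (fun y => ContinuousLinearMap.inverse (κ y) X) x := by
    have h1 : ContDiffAt ℝ (⊤ : ℕ∞) (fun y => ContinuousLinearMap.inverse (κ y)) x := by
      exact ((hcoe x ▸ contDiffAt_map_inverse (n := (⊤ : ℕ∞)) (e x)).comp x hκsmooth.contDiffAt :)
    exact (h1.differentiableAt (by simp)).clm_apply (differentiableAt_const X)
  have heq : ζ X = fun y => ContinuousLinearMap.inverse (κ y) X := funext fun y => hζ_eq X y
  rw [heq]
  exact this

theorem aux_perm2_sum {M : Type*} [AddCommMonoid M] (f : Equiv.Perm (Fin (1+1)) → M) :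
    ∑ σ : Equiv.Perm (Fin (1+1)), f σ = f 1 + f (Equiv.swap 0 1) := by
  rw [show (Finset.univ : Finset (Equiv.Perm (Fin 2))) = {1, Equiv.swap 0 1} by decide]
  rw [Finset.sum_pair (by decide)]

end Aux

/-- A `𝔤`-valued 1-form `κ` on the manifold `M = E`, with each
`κ_x : T_xM → 𝔤` a linear isomorphism (with pointwise inverse `ζ := κ⁻¹ : 𝔤 → X(M)`),
satisfies the Maurer–Cartan equation `dκ + (1/2)[κ,κ]^∧ = 0` if and only if
`ζ` is a Lie algebra homomorphism.  In this case `κ` is `𝔤`-equivariant: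
`L_{ζ_X}κ = −ad(X) ∘ κ` for all `X ∈ 𝔤`. -/
theorem stmt11
    {E 𝔤 : Type*} [NormedAddCommGroup E] [NormedSpace ℝ E] [FiniteDimensional ℝ E]
    [NormedAddCommGroup 𝔤] [NormedSpace ℝ 𝔤] [FiniteDimensional ℝ 𝔤]
    (brk : 𝔤 →ₗ[ℝ] 𝔤 →ₗ[ℝ] 𝔤)
    (hanti : ∀ X : 𝔤, brk X X = 0)
    (hjac : ∀ X Y Z : 𝔤, brk X (brk Y Z) = brk (brk X Y) Z + brk Y (brk X Z))
    (κ : E → E →L[ℝ] 𝔤)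
    (hκsmooth : ContDiff ℝ (⊤ : ℕ∞) κ)
    (ζ : 𝔤 → E → E)
    (hζκ : ∀ (x : E) (v : E), ζ (κ x v) x = v)
    (hκζ : ∀ (x : E) (X : 𝔤), κ x (ζ X x) = X) :
    ((∀ (x : E) (v : Fin (1 + 1) → E),
        extDer (fun y (w : Fin 1 → E) => κ y (w 0)) x v +
          (1 / 2 : ℝ) • wedgeOp (fun a b => brk a b)
            (fun w : Fin 1 → E => κ x (w 0)) (fun w : Fin 1 → E => κ x (w 0)) v = 0) ↔
      ((∀ x : E, IsLinearMap ℝ fun X => ζ X x) ∧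
        ∀ X Y : 𝔤, VectorField.lieBracket ℝ (ζ X) (ζ Y) = ζ (brk X Y))) ∧
    ((∀ (x : E) (v : Fin (1 + 1) → E),
        extDer (fun y (w : Fin 1 → E) => κ y (w 0)) x v +
          (1 / 2 : ℝ) • wedgeOp (fun a b => brk a b)
            (fun w : Fin 1 → E => κ x (w 0)) (fun w : Fin 1 → E => κ x (w 0)) v = 0) →
      ∀ (X : 𝔤) (x u : E),
        lieDerivForm (ζ X) (fun y (w : Fin 1 → E) => κ y (w 0)) x ![u] =
          -brk X (κ x u)) := by
    classical
  have hanti2 : ∀ X Y : 𝔤, brk X Y = - brk Y X := by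
    intro X Y
    have h := hanti (X + Y)
    simp only [map_add, LinearMap.add_apply, hanti, zero_add, add_zero] at h
    exact eq_neg_of_add_eq_zero_right h
  have hκd : ∀ x, DifferentiableAt ℝ κ x := fun x =>
    (hκsmooth.differentiable (by simp)).differentiableAt
  have hζd : ∀ (X : 𝔤) (x : E), DifferentiableAt ℝ (ζ X) x :=
    aux_zeta_smooth κ hκsmooth ζ hζκ hκζ
  -- derivative of κ applied to a constant vector
  have hDκc : ∀ (c : E) (x u : E),
      fderiv ℝ (fun y => κ y c) x u = fderiv ℝ κ x u c := by
    intro c x u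
    rw [fderiv_clm_apply (hκd x) (differentiableAt_const c)]
    simp
  -- key identity from differentiating κ (ζ X) = X
  have hkey : ∀ (X : 𝔤) (x u : E),
      κ x (fderiv ℝ (ζ X) x u) = - fderiv ℝ κ x u (ζ X x) := by
    intro X x u
    have hconst : (fun y => κ y (ζ X y)) = fun _ => X := funext fun y => hκζ y X
    have h0 : fderiv ℝ (fun y => κ y (ζ X y)) x = 0 := by
      rw [hconst]; exact fderiv_const_apply X
    rw [fderiv_clm_apply (hκd x) (hζd X x)] at h0
    have := congrFun (congrArg DFunLike.coe h0) u
    simp only [ContinuousLinearMap.add_apply, ContinuousLinearMap.coe_comp',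
      Function.comp_apply, ContinuousLinearMap.flip_apply,
      ContinuousLinearMap.zero_apply] at this
    exact eq_neg_of_add_eq_zero_left this
  -- reformulation of the Maurer-Cartan expression
  have hform : ∀ (x : E) (v : Fin (1+1) → E),
      extDer (fun y (w : Fin 1 → E) => κ y (w 0)) x v +
        (1 / 2 : ℝ) • wedgeOp (fun a b => brk a b)
          (fun w : Fin 1 → E => κ x (w 0)) (fun w : Fin 1 → E => κ x (w 0)) v
      = fderiv ℝ κ x (v 0) (v 1) - fderiv ℝ κ x (v 1) (v 0)
          + brk (κ x (v 0)) (κ x (v 1)) := by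
    intro x v
    have hext : extDer (fun y (w : Fin 1 → E) => κ y (w 0)) x v
        = fderiv ℝ κ x (v 0) (v 1) - fderiv ℝ κ x (v 1) (v 0) := by
      unfold extDer
      rw [Fin.sum_univ_two]
      have e0 : (fun y => κ y ((v ∘ (0 : Fin (1+1)).succAbove) 0)) = fun y => κ y (v 1) := rfl
      have e1 : (fun y => κ y ((v ∘ (1 : Fin (1+1)).succAbove) 0)) = fun y => κ y (v 0) := rfl
      have c0 : ((0 : Fin (1+1)) : ℕ) = 0 := rfl
      have c1 : ((1 : Fin (1+1)) : ℕ) = 1 := rfl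
      simp only [e0, e1, c0, c1, pow_zero, pow_one, one_smul, neg_one_smul]
      rw [hDκc, hDκc, sub_eq_add_neg]
    have hw : wedgeOp (fun a b => brk a b) (fun w : Fin 1 → E => κ x (w 0))
        (fun w : Fin 1 → E => κ x (w 0)) v
        = brk (κ x (v 0)) (κ x (v 1)) - brk (κ x (v 1)) (κ x (v 0)) := by
      unfold wedgeOp
      rw [aux_perm2_sum]
      have s1 : ((Equiv.Perm.sign (1 : Equiv.Perm (Fin (1+1))) : ℤ) : ℝ) = 1 := by simp
      have s2 : ((Equiv.Perm.sign (Equiv.swap (0:Fin (1+1)) 1) : ℤ) : ℝ) = -1 := by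
        rw [Equiv.Perm.sign_swap (by decide)]; norm_num
      have a0 : (1 : Equiv.Perm (Fin (1+1))) (Fin.castAdd 1 0) = 0 := rfl
      have a1 : (1 : Equiv.Perm (Fin (1+1))) (Fin.natAdd 1 0) = 1 := rfl
      have b0 : (Equiv.swap (0:Fin (1+1)) 1) (Fin.castAdd 1 0) = 1 := by decide
      have b1 : (Equiv.swap (0:Fin (1+1)) 1) (Fin.natAdd 1 0) = 0 := by decide
      simp only [s1, s2, a0, a1, b0, b1, one_smul, neg_one_smul, Nat.factorial]
      norm_num [sub_eq_add_neg]
    rw [hext, hw, hanti2 (κ x (v 1)) (κ x (v 0)), sub_neg_eq_add]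
    congr 1
    rw [← two_smul ℝ (brk (κ x (v 0)) (κ x (v 1))), smul_smul]
    norm_num
  -- the Maurer-Cartan condition, reformulated
  have hMC : (∀ (x : E) (v : Fin (1 + 1) → E),
        extDer (fun y (w : Fin 1 → E) => κ y (w 0)) x v +
          (1 / 2 : ℝ) • wedgeOp (fun a b => brk a b)
            (fun w : Fin 1 → E => κ x (w 0)) (fun w : Fin 1 → E => κ x (w 0)) v = 0) ↔
      (∀ (x u w : E), fderiv ℝ κ x u w - fderiv ℝ κ x w u + brk (κ x u) (κ x w) = 0) := by
    constructor
    · intro h x u w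
      have := h x ![u, w]
      rw [hform] at this
      simpa using this
    · intro h x v
      rw [hform]
      exact h x (v 0) (v 1)
  -- linearity of ζ in X, unconditionally
  have hlin : ∀ x : E, IsLinearMap ℝ fun X => ζ X x := by
    intro x
    constructor
    · intro X Y
      have h1 : κ x (ζ X x + ζ Y x) = X + Y := by rw [map_add, hκζ, hκζ]
      have := hζκ x (ζ X x + ζ Y x)
      rwa [h1] at this
    · intro c X
      have h1 : κ x (c • ζ X x) = c • X := by rw [map_smul, hκζ]
      have := hζκ x (c • ζ X x)
      rwa [h1] at this
  constructor
  · constructor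
    · intro hP
      refine ⟨hlin, ?_⟩
      intro X Y
      funext x
      have hb : VectorField.lieBracket ℝ (ζ X) (ζ Y) x =
          fderiv ℝ (ζ Y) x (ζ X x) - fderiv ℝ (ζ X) x (ζ Y x) := rfl
      have hκb : κ x (VectorField.lieBracket ℝ (ζ X) (ζ Y) x) = brk X Y := by
        rw [hb, map_sub, hkey, hkey]
        have := (hMC.1 hP) x (ζ Y x) (ζ X x)
        rw [hκζ, hκζ] at this
        have h2 : fderiv ℝ κ x (ζ Y x) (ζ X x) - fderiv ℝ κ x (ζ X x) (ζ Y x)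
            = - brk Y X := by
          exact eq_neg_of_add_eq_zero_left this
        rw [hanti2 X Y]
        rw [← h2]
        abel
      have := hζκ x (VectorField.lieBracket ℝ (ζ X) (ζ Y) x)
      rw [hκb] at this
      exact this.symm
    · rintro ⟨-, hbr⟩
      rw [hMC]
      intro x u w
      set X := κ x u with hX
      set Y := κ x w with hY
      have hζX : ζ X x = u := hζκ x u
      have hζY : ζ Y x = w := hζκ x w
      have h1 := congrFun (hbr X Y) x
      have hb : VectorField.lieBracket ℝ (ζ X) (ζ Y) x =
          fderiv ℝ (ζ Y) x (ζ X x) - fderiv ℝ (ζ X) x (ζ Y x) := rfl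
      have h2 : κ x (fderiv ℝ (ζ Y) x (ζ X x) - fderiv ℝ (ζ X) x (ζ Y x)) = brk X Y := by
        rw [← hb, h1, hκζ]
      rw [map_sub, hkey, hkey, hζX, hζY] at h2
      rw [← h2]
      abel
  · intro hP X x u
    have hld : lieDerivForm (ζ X) (fun y (w : Fin 1 → E) => κ y (w 0)) x ![u]
        = fderiv ℝ (fun y => κ y u) x (ζ X x) + κ x (fderiv ℝ (ζ X) x u) := by
      unfold lieDerivForm
      rw [Fin.sum_univ_one]
      show fderiv ℝ (fun y => κ y (![u] 0)) x (ζ X x) +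
        κ x (Function.update ![u] 0 (fderiv ℝ (ζ X) x (![u] 0)) 0) = _
      have e0 : (![u] : Fin 1 → E) 0 = u := rfl
      rw [e0]
      simp
    rw [hld, hkey, hDκc]
    have := (hMC.1 hP) x u (ζ X x)
    rw [hκζ] at this
    have h2 : fderiv ℝ κ x (ζ X x) u - fderiv ℝ κ x u (ζ X x) = brk (κ x u) X := by
      have h3 : fderiv ℝ κ x u (ζ X x) - fderiv ℝ κ x (ζ X x) u = - brk (κ x u) X := by
        exact eq_neg_of_add_eq_zero_left this
      rw [← neg_neg (brk (κ x u) X), ← h3]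
      abel
    rw [hanti2 X (κ x u), neg_neg, ← h2]
    abel
end
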